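/- In the setting of the gl(2,ℂ) ⊕ t₂ double, the bilinear form determined by ⟨x^i, X_j⟩ = δ^i_j, ⟨F₂₁, F₁₂⟩ = 1, with s₊ and s₋ both isotropic and the form symmetric, is a nondegenerate invariant symmetric bilinear form on gl(2,ℂ) ⊕ t₂. -/

import Mathlib

open Matrix

/-- `gl(2,ℂ) ⊕ t₂`, realized as the associative algebra
`Matrix (Fin 2) (Fin 2) ℂ × (Fin 2 → ℂ)` with the commutator Lie bracket. -/
abbrev gl2t2 : Type := Matrix (Fin 2) (Fin 2) ℂ × (Fin 2 → ℂ)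

noncomputable def Hgl (i : Fin 2) : gl2t2 := (Matrix.single i i 1, 0)

def Igl (i : Fin 2) : gl2t2 := (0, Pi.single i 1)

noncomputable def Fgl (i j : Fin 2) : gl2t2 := (Matrix.single i j 1, 0)

/-- `X_i := (H_i + i·I_i)/√2`. -/
noncomputable def Xgl (i : Fin 2) : gl2t2 :=
  ((Real.sqrt 2 : ℂ))⁻¹ • (Hgl i + Complex.I • Igl i)

/-- `x^i := (H_i − i·I_i)/√2`. -/
noncomputable def xgl (i : Fin 2) : gl2t2 :=
  ((Real.sqrt 2 : ℂ))⁻¹ • (Hgl i - Complex.I • Igl i)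

/-! The relations determine `Φ` on `X_i, x^i, F₁₂, F₂₁`, which span `gl(2,ℂ) ⊕ t₂`. The form
`⟨(A, u), (B, v)⟩ = tr (A B) + u ⬝ᵥ v` satisfies the same relations: `H_i, I_i` are orthonormal
for it, so `X_i, x^i` are null and `⟨x^i, X_j⟩ = δ_ij`. Hence `Φ` is this form, which is
nondegenerate, and invariant because the trace form is and `t₂` is abelian. -/

section TraceDotForm

variable (n R : Type*) [Fintype n] [CommRing R]

def traceDotForm : LinearMap.BilinForm R (Matrix n n R × (n → R)) :=
  LinearMap.mk₂ R (fun a b => (a.1 * b.1).trace + a.2 ⬝ᵥ b.2)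
    (fun a a' b => by
      simp only [Prod.fst_add, Prod.snd_add, Matrix.add_mul, Matrix.trace_add, add_dotProduct]
      ring)
    (fun c a b => by simp [Matrix.smul_mul, Matrix.trace_smul, smul_dotProduct, mul_add])
    (fun a b b' => by
      simp only [Prod.fst_add, Prod.snd_add, Matrix.mul_add, Matrix.trace_add, dotProduct_add]
      ring)
    (fun c a b => by simp [Matrix.mul_smul, Matrix.trace_smul, dotProduct_smul, mul_add])

variable {n R}

theorem traceDotForm_apply (a b : Matrix n n R × (n → R)) :
    traceDotForm n R a b = (a.1 * b.1).trace + a.2 ⬝ᵥ b.2 := rfl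

theorem traceDotForm_comm (a b : Matrix n n R × (n → R)) :
    traceDotForm n R a b = traceDotForm n R b a := by
  rw [traceDotForm_apply, traceDotForm_apply, Matrix.trace_mul_comm, dotProduct_comm]

theorem traceDotForm_isSymm : LinearMap.IsSymm (traceDotForm n R) :=
  ⟨traceDotForm_comm⟩

theorem traceDotForm_separatingLeft : (traceDotForm n R).SeparatingLeft := by
  classical
  intro a ha
  have hfst : a.1 = 0 := Matrix.ext_iff_trace_mul_right.mpr fun x => by
    simpa [traceDotForm_apply] using ha (x, 0)
  have hsnd : a.2 = 0 := dotProduct_eq_zero _ fun w => by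
    simpa [traceDotForm_apply] using ha (0, w)
  exact Prod.ext hfst hsnd

theorem traceDotForm_nondegenerate : (traceDotForm n R).Nondegenerate :=
  traceDotForm_isSymm.isRefl.nondegenerate_iff_separatingLeft.mpr traceDotForm_separatingLeft

theorem traceDotForm_lie_apply (a b c : Matrix n n R × (n → R)) :
    traceDotForm n R ⁅a, b⁆ c = traceDotForm n R a ⁅b, c⁆ := by
  have hcomm (u v : n → R) : u * v - v * u = 0 := by rw [mul_comm, sub_self]
  simp only [traceDotForm_apply, Ring.lie_def, Prod.fst_sub, Prod.fst_mul, Prod.snd_sub,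
    Prod.snd_mul, hcomm, zero_dotProduct, dotProduct_zero, Matrix.sub_mul, Matrix.mul_sub,
    Matrix.trace_sub, Matrix.mul_assoc]
  rw [Matrix.trace_mul_comm b.1, Matrix.mul_assoc]

end TraceDotForm

theorem LinearMap.BilinForm.ext_of_span_eq_top_of_symm {R M : Type*} [CommSemiring R]
    [AddCommMonoid M] [Module R M] {B B' : LinearMap.BilinForm R M}
    (hB : ∀ x y, B x y = B y x) (hB' : ∀ x y, B' x y = B' y x) {s : Set M}
    (hs : Submodule.span R s = ⊤) (h : ∀ x ∈ s, ∀ y ∈ s, B x y = B' x y ∨ B y x = B' y x) :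
    B = B' := by
  refine LinearMap.ext_on hs fun x hx => LinearMap.ext_on hs fun y hy => ?_
  rcases h x hx y hy with hxy | hyx
  · exact hxy
  · rw [hB, hB' x, hyx]

section Gl2t2

local notation "B" => traceDotForm (Fin 2) ℂ

theorem Hgl_eq_Fgl (i : Fin 2) : Hgl i = Fgl i i := rfl

theorem traceDotForm_Fgl_Fgl (i j k l : Fin 2) :
    B (Fgl i j) (Fgl k l) = if k = j ∧ l = i then 1 else 0 := by
  simp [traceDotForm_apply, Fgl, Matrix.trace_single_mul, Matrix.single_apply]

theorem traceDotForm_Hgl_Hgl (i j : Fin 2) : B (Hgl i) (Hgl j) = if i = j then 1 else 0 := by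
  simp [traceDotForm_apply, Hgl, Matrix.trace_single_mul, Matrix.single_apply, eq_comm]

theorem traceDotForm_Igl_Igl (i j : Fin 2) : B (Igl i) (Igl j) = if i = j then 1 else 0 := by
  simp [traceDotForm_apply, Igl, Pi.single_apply, eq_comm]

theorem traceDotForm_Hgl_Igl (i j : Fin 2) : B (Hgl i) (Igl j) = 0 := by
  simp [traceDotForm_apply, Hgl, Igl]

theorem traceDotForm_Igl_Hgl (i j : Fin 2) : B (Igl i) (Hgl j) = 0 := by
  simp [traceDotForm_apply, Hgl, Igl]

theorem traceDotForm_Igl_Fgl (k i j : Fin 2) : B (Igl k) (Fgl i j) = 0 := by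
  simp [traceDotForm_apply, Fgl, Igl]

theorem traceDotForm_Xgl_Xgl (i j : Fin 2) : B (Xgl i) (Xgl j) = 0 := by
  simp only [Xgl, map_smul, map_add, LinearMap.smul_apply, LinearMap.add_apply, smul_eq_mul,
    traceDotForm_Hgl_Hgl, traceDotForm_Igl_Igl, traceDotForm_Hgl_Igl, traceDotForm_Igl_Hgl]
  split_ifs
  · linear_combination ((Real.sqrt 2 : ℂ))⁻¹ ^ 2 * Complex.I_sq
  · ring

theorem traceDotForm_xgl_xgl (i j : Fin 2) : B (xgl i) (xgl j) = 0 := by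
  simp only [xgl, map_smul, map_sub, LinearMap.smul_apply, LinearMap.sub_apply, smul_eq_mul,
    traceDotForm_Hgl_Hgl, traceDotForm_Igl_Igl, traceDotForm_Hgl_Igl, traceDotForm_Igl_Hgl]
  split_ifs
  · linear_combination ((Real.sqrt 2 : ℂ))⁻¹ ^ 2 * Complex.I_sq
  · ring

theorem traceDotForm_xgl_Xgl (i j : Fin 2) : B (xgl i) (Xgl j) = if i = j then 1 else 0 := by
  simp only [Xgl, xgl, map_smul, map_add, map_sub, LinearMap.smul_apply, LinearMap.sub_apply,
    smul_eq_mul, traceDotForm_Hgl_Hgl, traceDotForm_Igl_Igl, traceDotForm_Hgl_Igl,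
    traceDotForm_Igl_Hgl]
  split_ifs
  · field_simp
    norm_num [← Complex.ofReal_pow]
  · ring

theorem traceDotForm_Xgl_Fgl (i : Fin 2) {k l : Fin 2} (hkl : k ≠ l) :
    B (Xgl i) (Fgl k l) = 0 := by
  simp only [Xgl, Hgl_eq_Fgl, map_smul, map_add, LinearMap.smul_apply, LinearMap.add_apply,
    smul_eq_mul, traceDotForm_Fgl_Fgl, traceDotForm_Igl_Fgl]
  rw [if_neg fun h => hkl (h.1.trans h.2.symm)]
  ring

theorem traceDotForm_Fgl_Xgl (i : Fin 2) {k l : Fin 2} (hkl : k ≠ l) :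
    B (Fgl k l) (Xgl i) = 0 := by
  rw [traceDotForm_comm, traceDotForm_Xgl_Fgl i hkl]

theorem traceDotForm_xgl_Fgl (i : Fin 2) {k l : Fin 2} (hkl : k ≠ l) :
    B (xgl i) (Fgl k l) = 0 := by
  simp only [xgl, Hgl_eq_Fgl, map_smul, map_sub, LinearMap.smul_apply, LinearMap.sub_apply,
    smul_eq_mul, traceDotForm_Fgl_Fgl, traceDotForm_Igl_Fgl]
  rw [if_neg fun h => hkl (h.1.trans h.2.symm)]
  ring

theorem Hgl_eq_smul_add (i : Fin 2) : Hgl i = ((Real.sqrt 2 : ℂ) / 2) • (Xgl i + xgl i) := by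
  unfold Xgl xgl
  match_scalars <;> field_simp <;> ring

theorem Igl_eq_smul_sub (i : Fin 2) :
    Igl i = (-(Complex.I * (Real.sqrt 2 : ℂ)) / 2) • (Xgl i - xgl i) := by
  unfold Xgl xgl
  match_scalars <;> field_simp <;> norm_num

theorem eq_sum_smul_Fgl_add_sum_smul_Igl (a : gl2t2) :
    a = ∑ i, ∑ j, a.1 i j • Fgl i j + ∑ k, a.2 k • Igl k := by
  refine Prod.ext ?_ ?_
  · nth_rw 1 [matrix_eq_sum_single a.1]
    simp [Fgl, Igl, Matrix.smul_single]
  · nth_rw 1 [pi_eq_sum_univ' a.2]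
    simp [Fgl, Igl]

def gl2t2Generators : Set gl2t2 := Set.range Xgl ∪ Set.range xgl ∪ {Fgl 0 1, Fgl 1 0}

theorem span_gl2t2Generators : Submodule.span ℂ gl2t2Generators = ⊤ := by
  set S := Submodule.span ℂ gl2t2Generators
  have hX (i : Fin 2) : Xgl i ∈ S := Submodule.subset_span (by simp [gl2t2Generators])
  have hx (i : Fin 2) : xgl i ∈ S := Submodule.subset_span (by simp [gl2t2Generators])
  have hH (i : Fin 2) : Hgl i ∈ S := by
    rw [Hgl_eq_smul_add]
    exact S.smul_mem _ (S.add_mem (hX i) (hx i))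
  have hI (k : Fin 2) : Igl k ∈ S := by
    rw [Igl_eq_smul_sub]
    exact S.smul_mem _ (S.sub_mem (hX k) (hx k))
  have hF (i j : Fin 2) : Fgl i j ∈ S := by
    fin_cases i <;> fin_cases j
    exacts [hH 0, Submodule.subset_span (by simp [gl2t2Generators]),
      Submodule.subset_span (by simp [gl2t2Generators]), hH 1]
  refine Submodule.eq_top_iff'.mpr fun a => ?_
  rw [eq_sum_smul_Fgl_add_sum_smul_Igl a]
  exact S.add_mem (S.sum_mem fun i _ => S.sum_mem fun j _ => S.smul_mem _ (hF i j))
    (S.sum_mem fun k _ => S.smul_mem _ (hI k))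

end Gl2t2

/-- the symmetric bilinear form on `gl(2,ℂ) ⊕ t₂` determined by
`⟨x^i, X_j⟩ = δ^i_j`, `⟨F₂₁, F₁₂⟩ = 1`, with `s₊ = span{X₁,X₂,F₁₂}` and
`s₋ = span{x¹,x²,F₂₁}` both isotropic, is nondegenerate and invariant. -/
theorem gl2_double_pairing (Φ : LinearMap.BilinForm ℂ gl2t2)
    (hsymm : ∀ a b, Φ a b = Φ b a)
    (hXX : ∀ i j, Φ (Xgl i) (Xgl j) = 0)
    (hXF : ∀ i, Φ (Xgl i) (Fgl 0 1) = 0)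
    (hFF : Φ (Fgl 0 1) (Fgl 0 1) = 0)
    (hxx : ∀ i j, Φ (xgl i) (xgl j) = 0)
    (hxf : ∀ i, Φ (xgl i) (Fgl 1 0) = 0)
    (hff : Φ (Fgl 1 0) (Fgl 1 0) = 0)
    (hpair : ∀ i j, Φ (xgl i) (Xgl j) = if i = j then 1 else 0)
    (hxF : ∀ i, Φ (xgl i) (Fgl 0 1) = 0)
    (hfX : ∀ j, Φ (Fgl 1 0) (Xgl j) = 0)
    (hfF : Φ (Fgl 1 0) (Fgl 0 1) = 1) :
    Φ.Nondegenerate ∧ ∀ a b c : gl2t2, Φ ⁅a, b⁆ c = Φ a ⁅b, c⁆ := by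
  have hΦ : Φ = traceDotForm (Fin 2) ℂ := by
    refine LinearMap.BilinForm.ext_of_span_eq_top_of_symm hsymm traceDotForm_comm
      span_gl2t2Generators ?_
    rintro a ((⟨i, rfl⟩ | ⟨i, rfl⟩) | rfl | rfl) b ((⟨j, rfl⟩ | ⟨j, rfl⟩) | rfl | rfl) <;>
      simp [hXX, hXF, hFF, hxx, hxf, hff, hpair, hxF, hfX, hfF, traceDotForm_Xgl_Xgl,
        traceDotForm_xgl_xgl, traceDotForm_xgl_Xgl, traceDotForm_Xgl_Fgl, traceDotForm_Fgl_Xgl,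
        traceDotForm_xgl_Fgl, traceDotForm_Fgl_Fgl]
  subst hΦ
  exact ⟨traceDotForm_nondegenerate, traceDotForm_lie_apply⟩
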